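/- Let I, U : ℝ → ℝ be twice continuously differentiable on an open interval containing q*, with I(q) > 0 and I'(q) > 0 on this interval, and set 𝓔(H, q) = H²/(2 I(q)) + U(q). Suppose h is differentiable on a neighborhood of q* with h(q*) = H* > 0 and ∂𝓔/∂q(h(q), q) = 0 for all q in this neighborhood. Then ∂²𝓔/∂q²(H*, q*) = (H* I'(q*)/I(q*)²) · h'(q*); in particular, ∂²𝓔/∂q²(H*, q*) has the same sign as h'(q*). -/

import Mathlib

/-!
Along the family of relative equilibria, `∂𝓔/∂q(h q, q) = 0` says `U' q = h(q)² I'(q) / (2 I(q)²)`,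
so at fixed `H*` the first derivative factors as
`∂𝓔/∂q(H*, q) = (h(q)² - H*²) · I'(q) / (2 I(q)²)`.
The first factor vanishes at `q*`, so differentiating the product there only the derivative
`2 H* h'(q*)` of the first factor survives; since `H* I'(q*) / I(q*)² > 0`, the signs agree.
-/

open Filter Topology

theorem HasDerivAt.mul_continuousAt_of_eq_zero {f g : ℝ → ℝ} {f' x : ℝ}
    (hf : HasDerivAt f f' x) (hfx : f x = 0) (hg : ContinuousAt g x) :
    HasDerivAt (fun y => f y * g y) (f' * g x) x := by
  rw [hasDerivAt_iff_tendsto_slope] at hf ⊢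
  have hslope : slope (fun y => f y * g y) x = fun y => slope f x y * g y := by
    ext y
    simp only [slope_def_field, hfx, zero_mul, sub_zero, div_mul_eq_mul_div]
  rw [hslope]
  exact hf.mul (hg.tendsto.mono_left nhdsWithin_le_nhds)

theorem Real.sign_mul_of_pos {c : ℝ} (hc : 0 < c) (x : ℝ) : Real.sign (c * x) = Real.sign x := by
  rcases lt_trichotomy x 0 with hx | rfl | hx
  · rw [Real.sign_of_neg hx, Real.sign_of_neg (mul_neg_of_pos_of_neg hc hx)]
  · rw [mul_zero]
  · rw [Real.sign_of_pos hx, Real.sign_of_pos (mul_pos hc hx)]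

noncomputable def amendedPotential (I U : ℝ → ℝ) (H q : ℝ) : ℝ := H ^ 2 / (2 * I q) + U q

theorem hasDerivAt_amendedPotential {I U : ℝ → ℝ} {I' U' q : ℝ} (H : ℝ)
    (hI : HasDerivAt I I' q) (hU : HasDerivAt U U' q) (hIq : I q ≠ 0) :
    HasDerivAt (amendedPotential I U H) (-(H ^ 2 * I') / (2 * I q ^ 2) + U') q := by
  have h : HasDerivAt (fun x => H ^ 2 / (2 * I x) + U x) _ q :=
    ((hasDerivAt_const q (H ^ 2)).div (hI.const_mul 2) (by positivity)).add hU
  exact h.congr_deriv (by field_simp; ring)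

theorem deriv_amendedPotential_eq_of_deriv_eq_zero {I U : ℝ → ℝ} {q : ℝ} (H K : ℝ)
    (hI : DifferentiableAt ℝ I q) (hU : DifferentiableAt ℝ U q) (hIq : I q ≠ 0)
    (hK : deriv (amendedPotential I U K) q = 0) :
    deriv (amendedPotential I U H) q = (K ^ 2 - H ^ 2) * (deriv I q / (2 * I q ^ 2)) := by
  rw [(hasDerivAt_amendedPotential K hI.hasDerivAt hU.hasDerivAt hIq).deriv] at hK
  rw [(hasDerivAt_amendedPotential H hI.hasDerivAt hU.hasDerivAt hIq).deriv]
  field_simp at hK ⊢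
  linarith

theorem deriv_deriv_amendedPotential_of_eventually_deriv_eq_zero {I U h : ℝ → ℝ} {q₀ : ℝ}
    (hI : ∀ᶠ q in 𝓝 q₀, DifferentiableAt ℝ I q) (hU : ∀ᶠ q in 𝓝 q₀, DifferentiableAt ℝ U q)
    (hI0 : ∀ᶠ q in 𝓝 q₀, I q ≠ 0) (hI' : ContinuousAt (deriv I) q₀)
    (hh : DifferentiableAt ℝ h q₀)
    (hequil : ∀ᶠ q in 𝓝 q₀, deriv (amendedPotential I U (h q)) q = 0) :
    deriv (deriv (amendedPotential I U (h q₀))) q₀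
      = (h q₀ * deriv I q₀ / I q₀ ^ 2) * deriv h q₀ := by
  have hfirst : deriv (amendedPotential I U (h q₀)) =ᶠ[𝓝 q₀]
      fun q => (h q ^ 2 - h q₀ ^ 2) * (deriv I q / (2 * I q ^ 2)) := by
    filter_upwards [hI, hU, hI0, hequil] with q hIq hUq hI0q hq
    exact deriv_amendedPotential_eq_of_deriv_eq_zero _ _ hIq hUq hI0q hq
  have hI0q₀ : I q₀ ≠ 0 := hI0.self_of_nhds
  have hcoeff : ContinuousAt (fun q => deriv I q / (2 * I q ^ 2)) q₀ :=
    hI'.div ((hI.self_of_nhds.continuousAt.pow 2).const_mul 2) (by positivity)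
  have hsq : HasDerivAt (fun q => h q ^ 2 - h q₀ ^ 2) (2 * h q₀ * deriv h q₀) q₀ := by
    simpa using (hh.hasDerivAt.pow 2).sub_const (h q₀ ^ 2)
  rw [hfirst.deriv_eq, (hsq.mul_continuousAt_of_eq_zero (sub_self _) hcoeff).deriv]
  field_simp

/-- Lemma relating the stability of a one-degree-of-freedom relative equilibrium
to how its angular momentum varies along the family: if `𝓔(H,q) = H²/(2 I q) + U q`,
`I, I' > 0`, and `q ↦ h q` parameterizes the family of relative equilibria
(`∂𝓔/∂q(h q, q) = 0` near `q*`, `h q* = H* > 0`), then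
`∂²𝓔/∂q²(H*, q*) = (H* I'(q*)/I(q*)²) · h'(q*)`; in particular the second
partial has the same sign as `h'(q*)`. -/
theorem stability_sign_equals_dH_dq
    (I U h : ℝ → ℝ) (qstar Hstar a b : ℝ)
    (hmem : qstar ∈ Set.Ioo a b)
    (hI : ContDiffOn ℝ 2 I (Set.Ioo a b)) (hU : ContDiffOn ℝ 2 U (Set.Ioo a b))
    (hIpos : ∀ q ∈ Set.Ioo a b, 0 < I q)
    (hI'pos : ∀ q ∈ Set.Ioo a b, 0 < deriv I q)
    (hHstar : 0 < Hstar) (hhq : h qstar = Hstar)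
    (hhdiff : ∀ᶠ q in nhds qstar, DifferentiableAt ℝ h q)
    (hequil : ∀ᶠ q in nhds qstar,
      deriv (fun x => (h q) ^ 2 / (2 * I x) + U x) q = 0) :
    deriv (deriv (fun x => Hstar ^ 2 / (2 * I x) + U x)) qstar
        = (Hstar * deriv I qstar / (I qstar) ^ 2) * deriv h qstar ∧
      Real.sign (deriv (deriv (fun x => Hstar ^ 2 / (2 * I x) + U x)) qstar)
        = Real.sign (deriv h qstar) := by
  subst hhq
  have hIoo : ∀ᶠ q in 𝓝 qstar, Set.Ioo a b ∈ 𝓝 q :=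
    (isOpen_Ioo.eventually_mem hmem).mono fun _ => isOpen_Ioo.mem_nhds
  have hsecond := deriv_deriv_amendedPotential_of_eventually_deriv_eq_zero
    (hIoo.mono fun q hq => (hI.contDiffAt hq).differentiableAt (by norm_num))
    (hIoo.mono fun q hq => (hU.contDiffAt hq).differentiableAt (by norm_num))
    (hIoo.mono fun q hq => (hIpos q (mem_of_mem_nhds hq)).ne')
    ((hI.contDiffAt hIoo.self_of_nhds).derivWithin (m := 0) (by norm_num)).continuousAt
    hhdiff.self_of_nhds hequil
  unfold amendedPotential at hsecond
  refine ⟨hsecond, ?_⟩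
  have hcoeff : 0 < h qstar * deriv I qstar / I qstar ^ 2 := by
    have := hIpos qstar hmem
    have := hI'pos qstar hmem
    positivity
  rw [hsecond, Real.sign_mul_of_pos hcoeff]
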